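/- arXiv:2006.07478 — 5 statements merged into one kernel-verified Lean document; each statement's English description precedes it below -/
import Mathlib

section
/- In the credit protocol, a node cannot have a positive current credit counter while its data queue is empty: in every reachable state of the protocol, if the current credit counter c > 0 then the data queue Q is nonempty. -/
/-- State of the credit protocol: `Q` = number of queued data items,
`S` = queue of signal credits, `c` = receiver's credit counter,
`k` = data items emitted since the sender's last signal. -/
structure PState where
  Q : ℕ
  S : List ℕ
  c : ℕ
  k : ℕ

/-- Transitions of the credit protocol. -/
inductive PStep : PState → PState → Prop
  | emitData (Q : ℕ) (S : List ℕ) (c k : ℕ) :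
      PStep ⟨Q, S, c, k⟩ ⟨Q + 1, S, c, k + 1⟩
  | emitSignalEmpty (Q c k : ℕ) :
      PStep ⟨Q, [], c, k⟩ ⟨Q, [Q], c, 0⟩
  | emitSignalNonempty (Q : ℕ) (S : List ℕ) (c k : ℕ) (h : S ≠ []) :
      PStep ⟨Q, S, c, k⟩ ⟨Q, S ++ [k], c, 0⟩
  | consumeData (Q : ℕ) (S : List ℕ) (c k : ℕ) (hQ : 0 < Q)
      (h : S = [] ∨ 0 < c) :
      PStep ⟨Q, S, c, k⟩ ⟨Q - 1, S, if S = [] then c else c - 1, k⟩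
  | transfer (Q h : ℕ) (S' : List ℕ) (k : ℕ) (hc : 0 < h) :
      PStep ⟨Q, h :: S', 0, k⟩ ⟨Q, 0 :: S', h, k⟩
  | consumeSignal (Q : ℕ) (S' : List ℕ) (k : ℕ) :
      PStep ⟨Q, 0 :: S', 0, k⟩ ⟨Q, S', 0, k⟩

/-- The initial state: empty queues, zero counters. -/
def initP : PState := ⟨0, [], 0, 0⟩

/-!
Every signal credit stands for data items that are still queued: whenever the signal queue is
nonempty, the receiver's counter, the pending credits and the items emitted since the last signal
together number at most `Q`, and when the signal queue is empty the counter is `0`. This invariant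
is preserved by every transition, and it gives `c ≤ Q`. Nothing needs to be known about `k` while
the signal queue is empty, because the signal that refills it carries all of `Q` rather than `k`.
-/

namespace PState

structure Inv (s : PState) : Prop where
  c_eq_zero_of_S_eq_nil : s.S = [] → s.c = 0
  c_add_sum_add_k_le_Q : s.S ≠ [] → s.c + s.S.sum + s.k ≤ s.Q

theorem Inv.c_le_Q {s : PState} (hs : s.Inv) : s.c ≤ s.Q := by
  by_cases hS : s.S = []
  · simp [hs.c_eq_zero_of_S_eq_nil hS]
  · have := hs.c_add_sum_add_k_le_Q hS
    omega

theorem inv_initP : initP.Inv :=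
  ⟨fun _ => rfl, fun h => absurd rfl h⟩

theorem Inv.of_pStep {s t : PState} (hs : s.Inv) (hst : PStep s t) : t.Inv := by
  obtain ⟨hnil, hcons⟩ := hs
  cases hst with
  | emitData Q S c k =>
    exact ⟨hnil, fun hS => by have := hcons hS; dsimp only at this ⊢; omega⟩
  | emitSignalEmpty Q c k =>
    have hc : c = 0 := hnil rfl
    exact ⟨fun h => absurd h (List.cons_ne_nil _ _), fun _ => by simp [hc]⟩
  | emitSignalNonempty Q S c k hS =>
    have := hcons hS
    refine ⟨fun h => absurd h (by simp), fun _ => ?_⟩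
    simp only [List.sum_append, List.sum_singleton] at this ⊢
    omega
  | consumeData Q S c k hQ hc =>
    by_cases hS : S = []
    · subst hS
      exact ⟨fun _ => hnil rfl, fun h => absurd rfl h⟩
    · have := hcons hS
      have hc : 0 < c := hc.resolve_left hS
      refine ⟨fun h => absurd h hS, fun _ => ?_⟩
      simp only [if_neg hS] at this ⊢
      omega
  | transfer Q h S' k hh =>
    have := hcons (List.cons_ne_nil _ _)
    refine ⟨fun h => absurd h (List.cons_ne_nil _ _), fun _ => ?_⟩
    simp only [List.sum_cons] at this ⊢
    omega
  | consumeSignal Q S' k =>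
    have := hcons (List.cons_ne_nil _ _)
    refine ⟨fun _ => rfl, fun _ => ?_⟩
    simp only [List.sum_cons] at this ⊢
    omega

theorem Inv.of_reachable {s : PState} (h : Relation.ReflTransGen PStep initP s) : s.Inv := by
  induction h with
  | refl => exact inv_initP
  | tail _ hstep ih => exact ih.of_pStep hstep

end PState

/-- in every reachable state of the credit protocol, a positive
current credit counter implies that the data queue is nonempty. -/
theorem credit_implies_data (s : PState)
    (hreach : Relation.ReflTransGen PStep initP s) (hc : 0 < s.c) :
    0 < s.Q :=
  hc.trans_le (PState.Inv.of_reachable hreach).c_le_Q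
end

section
/- Progress: in the credit protocol, if a node has pending input (a queued data item or a queued signal), then at least one receiver transition is enabled: it can consume a data item, transfer credit from the head signal, or consume the head signal (assuming its downstream output queue has space). -/
theorem exists_cons_pos_or_exists_zero_cons {S : List ℕ} (hS : S ≠ []) :
    (∃ h S', S = h :: S' ∧ 0 < h) ∨ ∃ S', S = 0 :: S' := by
  obtain ⟨h, S', rfl⟩ := List.exists_cons_of_ne_nil hS
  rcases Nat.eq_zero_or_pos h with rfl | hpos
  · exact .inr ⟨S', rfl⟩
  · exact .inl ⟨h, S', rfl, hpos⟩

/-- progress: consider a credit-protocol channel state with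
`Q` queued data items, signal-credit queue `S`, and credit counter `c`
satisfying the reachable-state invariant `0 < c → 0 < Q`.  If the node has
pending input (a queued data item or a queued signal), then at least one
receiver transition is enabled: consume-data (`0 < Q` and `S = [] ∨ 0 < c`),
transfer-credit (`c = 0`, `S` nonempty with positive head credit), or
consume-signal (`c = 0`, `S` nonempty with zero head credit). -/
theorem receiver_progress (Q : ℕ) (S : List ℕ) (c : ℕ)
    (hinv : 0 < c → 0 < Q) (hpending : 0 < Q ∨ S ≠ []) :
    (0 < Q ∧ (S = [] ∨ 0 < c)) ∨
    (c = 0 ∧ ∃ h S', S = h :: S' ∧ 0 < h) ∨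
    (c = 0 ∧ ∃ S', S = 0 :: S') := by
  rcases Nat.eq_zero_or_pos c with rfl | hc
  · by_cases hS : S = []
    · exact .inl ⟨hpending.resolve_right (not_not.mpr hS), .inl hS⟩
    · exact .inr ((exists_cons_pos_or_exists_zero_cons hS).imp (⟨rfl, ·⟩) (⟨rfl, ·⟩))
  · exact .inl ⟨hinv hc, .inr hc⟩
end

section
/- Deadlock freedom / termination for a linear pipeline: consider a linear pipeline of n nodes where each firing of a node strictly consumes at least one pending input (data or signal) from its input queues and enqueues at most a bounded number of outputs downstream, and where the last node's output space is unbounded. If the total initial input is finite and no new external input arrives, then under any scheduler that repeatedly fires some fireable node, the system reaches in finitely many steps a state in which no node has pending data or signals. -/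
/-! A firing of node `i` strictly decreases `q i` and leaves every upstream queue untouched, so
it strictly decreases the state in the lexicographic order on `Fin n → ℕ`, which is well-founded;
hence every execution is finite. If some node has pending input, the last such node `m` can fire:
its downstream queue is empty, so it has room for the `B ≤ C` outputs of consuming one input.
Hence an execution can only stop at `q = 0`. -/

/-- A firing of node `i` in a linear pipeline of `n` nodes with pending-input
counts `q`: the node consumes `d ≥ 1` pending inputs and enqueues `out ≤ B·d`
outputs at node `i+1` (nothing if `i` is the last node); the downstream queue
has finite capacity `C`, which the firing may not overflow. -/
def FireAt (n B C : ℕ) (i : Fin n) (q q' : Fin n → ℕ) : Prop :=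
  ∃ d out : ℕ, 1 ≤ d ∧ d ≤ q i ∧ out ≤ B * d ∧
    (∀ j : Fin n, q' j =
      if j = i then q i - d
      else if (j : ℕ) = (i : ℕ) + 1 then q j + out else q j) ∧
    (∀ j : Fin n, (j : ℕ) = (i : ℕ) + 1 → q j + out ≤ C)

/-- Some node fires. -/
def Fire (n B C : ℕ) (q q' : Fin n → ℕ) : Prop :=
  ∃ i : Fin n, FireAt n B C i q q'

open Finset

theorem FireAt.toLex_lt {n B C : ℕ} {i : Fin n} {q q' : Fin n → ℕ} (h : FireAt n B C i q q') :
    toLex q' < toLex q := by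
  obtain ⟨d, out, hd, hdq, -, hq', -⟩ := h
  refine ⟨i, fun j hji => ?_, ?_⟩
  · have hj : (j : ℕ) ≠ i + 1 := by have : (j : ℕ) < i := hji; omega
    simp [hq' j, hji.ne, hj]
  · show q' i < q i
    rw [hq' i, if_pos rfl]
    omega

theorem Fire.toLex_lt {n B C : ℕ} {q q' : Fin n → ℕ} (h : Fire n B C q q') :
    toLex q' < toLex q :=
  let ⟨_, hi⟩ := h; hi.toLex_lt

theorem not_exists_fire_seq (n B C : ℕ) :
    ¬ ∃ f : ℕ → (Fin n → ℕ), ∀ k, Fire n B C (f k) (f (k + 1)) := by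
  rintro ⟨f, hf⟩
  obtain ⟨k, hk⟩ := WellFounded.not_rel_apply_succ (r := (· < ·)) (toLex ∘ f)
  exact hk (hf k).toLex_lt

theorem exists_fireAt_of_forall_lt_eq_zero {n B C : ℕ} (hC : B ≤ C) {q : Fin n → ℕ} {m : Fin n}
    (hm : q m ≠ 0) (hlast : ∀ j, m < j → q j = 0) : ∃ q', FireAt n B C m q q' := by
  refine ⟨fun j => if j = m then q m - 1 else if (j : ℕ) = m + 1 then q j + B else q j,
    1, B, le_rfl, Nat.one_le_iff_ne_zero.mpr hm, (mul_one B).ge, fun j => rfl, fun j hj => ?_⟩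
  rw [hlast j (by rw [Fin.lt_def]; omega), zero_add]
  exact hC

theorem exists_last_ne_zero {ι M : Type*} [LinearOrder ι] [Fintype ι] [Zero M] {q : ι → M} {i : ι}
    (hi : q i ≠ 0) :
    ∃ m, q m ≠ 0 ∧ ∀ j, m < j → q j = 0 := by
  classical
  obtain ⟨m, hm, hmax⟩ := (univ.filter (q · ≠ 0)).exists_max_image id ⟨i, by simpa using hi⟩
  refine ⟨m, (mem_filter.mp hm).2, fun j hmj => ?_⟩
  by_contra hj
  exact (hmax j (by simpa using hj)).not_gt hmj

theorem pipeline_terminates_general (n B C : ℕ) (hC : B ≤ C) :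
    (¬ ∃ f : ℕ → (Fin n → ℕ), ∀ k, Fire n B C (f k) (f (k + 1))) ∧
    (∀ q : Fin n → ℕ, (¬ ∃ q', Fire n B C q q') → ∀ i, q i = 0) := by
  refine ⟨not_exists_fire_seq n B C, fun q hstuck i => ?_⟩
  by_contra hi
  obtain ⟨m, hm, hlast⟩ := exists_last_ne_zero hi
  obtain ⟨q', hfire⟩ := exists_fireAt_of_forall_lt_eq_zero hC hm hlast
  exact hstuck ⟨q', m, hfire⟩

/-- deadlock freedom / termination: in a linear pipeline whose
downstream queues have capacity `C ≥ B`, (1) there is no infinite sequence of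
firings (so every maximal execution from a finite initial input is finite),
and (2) any state in which no node can fire has no pending data or signals at
any node, i.e. maximal executions end with `q = 0`. -/
theorem pipeline_terminates (n B C : ℕ) (hn : 0 < n) (hC : B ≤ C) :
    (¬ ∃ f : ℕ → (Fin n → ℕ), ∀ k, Fire n B C (f k) (f (k + 1))) ∧
    (∀ q : Fin n → ℕ, (¬ ∃ q', Fire n B C q q') → ∀ i, q i = 0) :=
  pipeline_terminates_general n B C hC
end

section
/- If a node with pending input exists in a linear pipeline, then the last such node is never blocked by lack of downstream queue space: either it is the final node (with unbounded output space), or all of its downstream queues are empty, hence it can be fired. -/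
lemma eq_zero_of_forall_pos_le {α : Type*} [LinearOrder α] {q : α → ℕ} {m : α}
    (hlargest : ∀ j, 0 < q j → j ≤ m) {j : α} (hj : m < j) : q j = 0 := by
  by_contra hne
  exact (hlargest j (Nat.pos_of_ne_zero hne)).not_gt hj

lemma Fin.lt_of_val_eq_succ {n : ℕ} {i j : Fin n} (h : (j : ℕ) = (i : ℕ) + 1) : i < j := by
  rw [Fin.lt_def, h]
  exact Nat.lt_succ_self _

def fireResult {n : ℕ} (i : Fin n) (q : Fin n → ℕ) (d out : ℕ) (j : Fin n) : ℕ :=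
  if j = i then q i - d else if (j : ℕ) = (i : ℕ) + 1 then q j + out else q j

lemma fireAt_fireResult {n B C d out : ℕ} {i : Fin n} {q : Fin n → ℕ}
    (hd : 1 ≤ d) (hdq : d ≤ q i) (hout : out ≤ B * d)
    (hroom : ∀ j : Fin n, (j : ℕ) = (i : ℕ) + 1 → q j + out ≤ C) :
    FireAt n B C i q (fireResult i q d out) :=
  ⟨d, out, hd, hdq, hout, fun _ => rfl, hroom⟩

lemma fireResult_of_val_eq_succ {n d out : ℕ} {i j : Fin n} (q : Fin n → ℕ)
    (hj : (j : ℕ) = (i : ℕ) + 1) : fireResult i q d out j = q j + out := by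
  rw [fireResult, if_neg (Fin.lt_of_val_eq_succ hj).ne', if_pos hj]

/-- if some node of a linear pipeline has pending input, then the
last such node `m` is never blocked by lack of downstream queue space: all
nodes after `m` have empty queues (so `m`'s downstream queue, if any, is
empty); hence — given the downstream capacity `C` is at least the maximum
per-firing output `B` — even a maximal-output minimal firing of `m` fits in
the downstream queue, and node `m` can be fired. -/
theorem last_pending_node_fireable (n B C : ℕ) (hC : B ≤ C)
    (q : Fin n → ℕ) (m : Fin n) (hm : 0 < q m)
    (hlargest : ∀ j : Fin n, 0 < q j → j ≤ m) :
    (∀ j : Fin n, m < j → q j = 0) ∧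
    (∀ j : Fin n, (j : ℕ) = (m : ℕ) + 1 → q j + B * 1 ≤ C) ∧
    (∀ out : ℕ, out ≤ B * 1 → ∃ q', FireAt n B C m q q' ∧
      ∀ j : Fin n, (j : ℕ) = (m : ℕ) + 1 → q' j = q j + out) := by
  have hzero : ∀ j : Fin n, m < j → q j = 0 := fun j => eq_zero_of_forall_pos_le hlargest
  have hroom : ∀ j : Fin n, (j : ℕ) = (m : ℕ) + 1 → q j + B * 1 ≤ C := by
    intro j hj
    rw [hzero j (Fin.lt_of_val_eq_succ hj), zero_add, mul_one]
    exact hC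
  refine ⟨hzero, hroom, fun out hout => ⟨fireResult m q 1 out, ?_, ?_⟩⟩
  · exact fireAt_fireResult le_rfl hm hout fun j hj => (Nat.add_le_add_left hout _).trans (hroom j hj)
  · exact fun j hj => fireResult_of_val_eq_succ q hj
end

section
/- Signals partition SIMD ensembles by region: in any execution of the credit protocol where the sender emits the elements of regions R₀, …, R_b separated by signals, and the receiver processes data in ensembles of size at most min(w, current credit counter when a signal is pending), no ensemble ever contains elements from two different regions. -/
/-- State of the credit protocol where the sender emits the elements of
regions `R₀, R₁, …` separated by signals.  `cur` is the index of the region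
currently being emitted; `Q` holds the region tags of queued data items;
`S` is the queue of signal credits; `c` the receiver's credit counter;
`k` the items emitted since the last signal; `batches` records the SIMD
ensembles (as lists of region tags) consumed so far. -/
structure BState where
  cur : ℕ
  Q : List ℕ
  S : List ℕ
  c : ℕ
  k : ℕ
  batches : List (List ℕ)

/-- Transitions, parameterized by the SIMD width `w`.  The receiver consumes
data in batches (ensembles) of size at most `w`, additionally bounded by the
current credit counter whenever a signal is pending. -/
inductive BStep (w : ℕ) : BState → BState → Prop
  | emitData (s : BState) :
      BStep w s { s with Q := s.Q ++ [s.cur], k := s.k + 1 }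
  | emitSignal (s : BState) :
      BStep w s { s with
        S := s.S ++ [if s.S = [] then s.Q.length else s.k],
        k := 0, cur := s.cur + 1 }
  | consumeBatch (s : BState) (batch Q' : List ℕ)
      (hQ : s.Q = batch ++ Q') (hne : 0 < batch.length)
      (hw : batch.length ≤ w)
      (hcredit : s.S ≠ [] → batch.length ≤ s.c) :
      BStep w s { s with Q := Q', batches := s.batches ++ [batch],
                         c := if s.S = [] then s.c else s.c - batch.length }
  | transfer (s : BState) (h : ℕ) (S' : List ℕ)
      (hS : s.S = h :: S') (hc : s.c = 0) (hh : 0 < h) :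
      BStep w s { s with S := 0 :: S', c := h }
  | consumeSignal (s : BState) (S' : List ℕ)
      (hS : s.S = 0 :: S') (hc : s.c = 0) :
      BStep w s { s with S := S' }

/-- Initial state. -/
def initB : BState := ⟨0, [], [], 0, 0, []⟩

/-! The queue always consists of runs of equal tags, one per region in emission order, and the
credit of the oldest pending signal (the counter `c` plus the head of `S`) is exactly the length
of the first run. A batch bounded by `c` is therefore a prefix of that run; with no signal
pending, the whole queue belongs to the current region. -/

open List

def regionTags : ℕ → List ℕ → List ℕ
  | _, [] => []
  | t, n :: ns => replicate n t ++ regionTags (t + 1) ns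

lemma regionTags_append (t : ℕ) (ns ms : List ℕ) :
    regionTags t (ns ++ ms) = regionTags t ns ++ regionTags (t + ns.length) ms := by
  induction ns generalizing t with
  | nil => simp [regionTags]
  | cons n ns ih => simp [regionTags, ih, add_assoc, add_comm 1]

lemma List.eq_replicate_of_append_eq_replicate_append {α : Type*} {l₁ l₂ r : List α} {n : ℕ}
    {a : α} (h : l₁ ++ l₂ = replicate n a ++ r) (hle : l₁.length ≤ n) :
    l₁ = replicate l₁.length a ∧ l₂ = replicate (n - l₁.length) a ++ r := by
  rw [← Nat.add_sub_cancel' hle, replicate_add, append_assoc] at h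
  exact append_inj h (by simp)

-- The oldest pending region `t` has `c + h` items queued, its credit being split between the
-- counter and the head `h` of `S`; the rest of `S` holds the sizes of the later complete regions.
structure CreditInvariant (s : BState) : Prop where
  idle : s.S = [] → s.c = 0 ∧ s.Q = replicate s.Q.length s.cur
  pending : ∀ h L, s.S = h :: L →
    ∃ t, s.cur = t + L.length + 1 ∧ s.Q = regionTags t ((s.c + h) :: L ++ [s.k])
  batches : ∀ b ∈ s.batches, ∃ a, b = replicate b.length a

namespace CreditInvariant

variable {s : BState}

lemma init : CreditInvariant initB where
  idle _ := by simp [initB]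
  pending _ _ h := by simp [initB] at h
  batches _ h := by simp [initB] at h

lemma emitData (hs : CreditInvariant s) :
    CreditInvariant { s with Q := s.Q ++ [s.cur], k := s.k + 1 } where
  idle hS := by
    obtain ⟨hc, hQ⟩ := hs.idle hS
    refine ⟨hc, ?_⟩
    rw [hQ]
    simp [← replicate_succ']
  pending h L hS := by
    obtain ⟨t, hcur, hQ⟩ := hs.pending h L hS
    refine ⟨t, hcur, ?_⟩
    simp only [hQ, regionTags_append, regionTags, replicate_succ']
    simp [hcur, add_assoc]
  batches := hs.batches

lemma emitSignal (hs : CreditInvariant s) :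
    CreditInvariant { s with
      S := s.S ++ [if s.S = [] then s.Q.length else s.k], k := 0, cur := s.cur + 1 } := by
  refine ⟨fun hS => by simp at hS, fun h L hS => ?_, hs.batches⟩
  dsimp only at hS ⊢
  cases hS₀ : s.S with
  | nil =>
    obtain ⟨hc, hQ⟩ := hs.idle hS₀
    simp only [hS₀, nil_append, if_pos, cons.injEq] at hS
    obtain ⟨rfl, rfl⟩ := hS
    exact ⟨s.cur, by simp, by simp [regionTags, hc, ← hQ]⟩
  | cons h₀ L₀ =>
    obtain ⟨t, hcur, hQ⟩ := hs.pending h₀ L₀ hS₀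
    simp only [hS₀, reduceCtorEq, reduceIte, cons_append, cons.injEq] at hS
    obtain ⟨rfl, rfl⟩ := hS
    refine ⟨t, by simp [hcur, add_assoc], ?_⟩
    simp [hQ, regionTags_append, regionTags]

lemma consumeBatch (hs : CreditInvariant s) {batch Q' : List ℕ} (hQ : s.Q = batch ++ Q')
    (hcredit : s.S ≠ [] → batch.length ≤ s.c) :
    CreditInvariant { s with Q := Q', batches := s.batches ++ [batch],
                             c := if s.S = [] then s.c else s.c - batch.length } := by
  cases hS₀ : s.S with
  | nil =>
    obtain ⟨hc, hQr⟩ := hs.idle hS₀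
    rw [hQ, append_eq_replicate_iff] at hQr
    refine ⟨fun _ => ⟨by simp [hc], hQr.2.2⟩, fun _ _ hS => by simp at hS, ?_⟩
    simp only [mem_append, mem_singleton]
    rintro b (hb | rfl)
    exacts [hs.batches b hb, ⟨_, hQr.2.1⟩]
  | cons h₀ L₀ =>
    obtain ⟨t, hcur, hQt⟩ := hs.pending h₀ L₀ hS₀
    have hle : batch.length ≤ s.c := hcredit (by simp [hS₀])
    rw [hQ, cons_append, regionTags] at hQt
    obtain ⟨hb, hQ'⟩ :=
      eq_replicate_of_append_eq_replicate_append hQt (hle.trans (Nat.le_add_right _ _))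
    refine ⟨fun hS => by simp at hS, fun h L hS => ?_, ?_⟩
    · simp only [cons.injEq] at hS
      obtain ⟨rfl, rfl⟩ := hS
      refine ⟨t, hcur, ?_⟩
      simp only [if_neg (cons_ne_nil _ _), ← Nat.sub_add_comm hle, hQ', cons_append, regionTags]
    · simp only [mem_append, mem_singleton]
      rintro b (hb' | rfl)
      exacts [hs.batches b hb', ⟨_, hb⟩]

lemma transfer (hs : CreditInvariant s) {h : ℕ} {S' : List ℕ} (hS : s.S = h :: S')
    (hc : s.c = 0) : CreditInvariant { s with S := 0 :: S', c := h } := by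
  refine ⟨fun hS' => by simp at hS', fun h' L hS' => ?_, hs.batches⟩
  simp only [cons.injEq] at hS'
  obtain ⟨rfl, rfl⟩ := hS'
  obtain ⟨t, hcur, hQ⟩ := hs.pending h S' hS
  exact ⟨t, hcur, by simpa [hc] using hQ⟩

lemma consumeSignal (hs : CreditInvariant s) {S' : List ℕ} (hS : s.S = 0 :: S')
    (hc : s.c = 0) : CreditInvariant { s with S := S' } := by
  obtain ⟨t, hcur, hQ⟩ := hs.pending 0 S' hS
  simp only [hc, cons_append, regionTags, add_zero, replicate_zero, nil_append] at hQ
  refine ⟨fun hS' => ?_, fun h L hS' => ?_, hs.batches⟩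
  · subst hS'
    simp only [length_nil, add_zero] at hcur
    exact ⟨hc, by simp [hQ, hcur, regionTags]⟩
  · subst hS'
    exact ⟨t + 1, by simp [hcur]; omega, by simpa [hc] using hQ⟩

lemma of_step {w : ℕ} {s' : BState} (hs : CreditInvariant s) (hstep : BStep w s s') :
    CreditInvariant s' := by
  cases hstep with
  | emitData => exact hs.emitData
  | emitSignal => exact hs.emitSignal
  | consumeBatch _ _ hQ _ _ hcredit => exact hs.consumeBatch hQ hcredit
  | transfer _ _ hS hc _ => exact hs.transfer hS hc
  | consumeSignal _ hS hc => exact hs.consumeSignal hS hc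

lemma of_reachable {w : ℕ} (hreach : Relation.ReflTransGen (BStep w) initB s) :
    CreditInvariant s := by
  induction hreach with
  | refl => exact init
  | tail _ hstep ih => exact ih.of_step hstep

end CreditInvariant

/-- signals partition SIMD ensembles by region: in any
reachable state of the protocol, every consumed ensemble contains elements of
a single region only — no batch mixes elements from two different regions. -/
theorem batches_single_region (w : ℕ) (s : BState)
    (hreach : Relation.ReflTransGen (BStep w) initB s) :
    ∀ batch ∈ s.batches, ∀ x ∈ batch, ∀ y ∈ batch, x = y := by
  intro batch hbatch x hx y hy
  obtain ⟨a, ha⟩ := (CreditInvariant.of_reachable hreach).batches batch hbatch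
  rw [ha] at hx hy
  exact (eq_of_mem_replicate hx).trans (eq_of_mem_replicate hy).symm
end
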